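/- arXiv:2603.11250 — 3 statements merged into one kernel-verified Lean document; each statement's English description precedes it below -/
import Mathlib

section
/- Let H be a real inner product space, B : H → H → ℝ a symmetric bilinear form satisfying the coercivity bound α₀ · ‖W‖² ≤ B(W, W) for all W ∈ H, for some α₀ > 0, let ℓ : H → ℝ be a linear functional, and define Π(U) = (1/2) B(U, U) − ℓ(U). Suppose U⋆ ∈ H minimizes Π over H. Let N ⊆ H be a nonempty set, let U_dl ∈ N minimize Π over N, set Δ_N = Π(U_dl) − Π(U⋆), let Π_M : H → ℝ be any function with |Π(V) − Π_M(V)| ≤ ε for all V ∈ N, for some ε ≥ 0, and let U_M ∈ N minimize Π_M over N. Then ‖U_M − U⋆‖ ≤ √( (2/α₀) (Δ_N + 2ε) ). -/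
/-- Total error estimate in the transformed variables: if `B` is symmetric and coercive
with constant `α₀ > 0`, `U⋆` minimizes `Π(U) = ½ B(U,U) − ℓ(U)` over `H`, `U_dl`
minimizes `Π` over the network class `N` with bias gap `Δ_N = Π(U_dl) − Π(U⋆)`, the
empirical objective `Π_M` satisfies `|Π(V) − Π_M(V)| ≤ ε` on `N`, and `U_M` minimizes
`Π_M` over `N`, then `‖U_M − U⋆‖ ≤ √((2/α₀)(Δ_N + 2ε))`. -/
theorem deepLS_total_error_estimate {H : Type*} [NormedAddCommGroup H] [InnerProductSpace ℝ H]
    (B : H →ₗ[ℝ] H →ₗ[ℝ] ℝ) (hBsymm : ∀ U V : H, B U V = B V U)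
    (α₀ : ℝ) (hα₀ : 0 < α₀) (hcoer : ∀ W : H, α₀ * ‖W‖ ^ 2 ≤ B W W)
    (l : H →ₗ[ℝ] ℝ) (P : H → ℝ) (hP : ∀ U : H, P U = (1 / 2) * B U U - l U)
    (Ustar : H) (hmin : ∀ V : H, P Ustar ≤ P V)
    (N : Set H) (hN : N.Nonempty) (Udl : H) (hUdl : Udl ∈ N)
    (hmindl : ∀ V ∈ N, P Udl ≤ P V)
    (ΔN : ℝ) (hΔN : ΔN = P Udl - P Ustar)
    (PM : H → ℝ) (ε : ℝ) (hε : 0 ≤ ε) (hpert : ∀ V ∈ N, |P V - PM V| ≤ ε)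
    (UM : H) (hUM : UM ∈ N) (hminM : ∀ V ∈ N, PM UM ≤ PM V) :
    ‖UM - Ustar‖ ≤ Real.sqrt ((2 / α₀) * (ΔN + 2 * ε)) := by
  set W : H := UM - Ustar with hW
  set c : ℝ := B Ustar W - l W with hc
  set D : ℝ := B W W with hD
  have hDnn : 0 ≤ D := le_trans (by positivity) (hcoer W)
  -- Euler–Lagrange: for all t, 0 ≤ t*c + t^2/2 * D
  have key : ∀ t : ℝ, 0 ≤ t * c + t ^ 2 / 2 * D := by
    intro t
    have h := hmin (Ustar + t • W)
    rw [hP, hP] at h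
    have hexp : B (Ustar + t • W) (Ustar + t • W)
        = B Ustar Ustar + 2 * t * B Ustar W + t ^ 2 * B W W := by
      simp only [map_add, map_smul, LinearMap.add_apply, LinearMap.smul_apply,
        smul_eq_mul]
      rw [hBsymm W Ustar]; ring
    have hl : l (Ustar + t • W) = l Ustar + t * l W := by
      simp [map_add, map_smul]
    rw [hexp, hl] at h
    simp only [hc, hD]
    nlinarith [h]
  clear_value c D
  have hc0 : c = 0 := by
    have h1 := key (-c / (D + 1))
    have hs : (0:ℝ) < D + 1 := by linarith
    have e : -c / (D + 1) * c + (-c / (D + 1)) ^ 2 / 2 * D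
        = -(c ^ 2 * (D + 2)) / (2 * (D + 1) ^ 2) := by
      field_simp; ring
    rw [e] at h1
    have h2 := mul_nonneg h1 (by positivity : (0:ℝ) ≤ 2 * (D + 1) ^ 2)
    rw [div_mul_cancel₀ _ (by positivity : (2 * (D + 1) ^ 2) ≠ 0)] at h2
    nlinarith [sq_nonneg c]
  -- P UM - P Ustar = c + D/2
  have hPdiff : P UM - P Ustar = c + D / 2 := by
    have hUMeq : UM = Ustar + W := by rw [hW]; abel
    rw [hP, hP, hUMeq]
    have hexp : B (Ustar + W) (Ustar + W)
        = B Ustar Ustar + 2 * B Ustar W + B W W := by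
      simp only [map_add, LinearMap.add_apply]
      rw [hBsymm W Ustar]; ring
    rw [hexp, map_add]
    simp only [hc, hD]; ring
  -- P UM ≤ ΔN + 2ε + P Ustar
  have h1 : P UM ≤ PM UM + ε := by
    have := hpert UM hUM
    have := abs_le.mp this
    linarith [this.1]
  have h2 : PM UM ≤ PM Udl := hminM Udl hUdl
  have h3 : PM Udl ≤ P Udl + ε := by
    have := abs_le.mp (hpert Udl hUdl)
    linarith [this.2]
  have hbound : D ≤ 2 * (ΔN + 2 * ε) := by
    have : P UM - P Ustar ≤ ΔN + 2 * ε := by rw [hΔN]; linarith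
    rw [hPdiff, hc0] at this; linarith
  have hnorm : ‖W‖ ^ 2 ≤ (2 / α₀) * (ΔN + 2 * ε) := by
    have hcW := hcoer W
    rw [← hD] at hcW
    rw [div_mul_eq_mul_div, le_div_iff₀ hα₀]
    nlinarith
  calc ‖W‖ = Real.sqrt (‖W‖ ^ 2) := by
        rw [Real.sqrt_sq (norm_nonneg W)]
    _ ≤ Real.sqrt ((2 / α₀) * (ΔN + 2 * ε)) := Real.sqrt_le_sqrt hnorm
end

section
/- Let E = EuclideanSpace ℝ (Fin n), let μ > 0 be a real number, let K : E →L[ℝ] E be a symmetric continuous linear map (⟨K ζ, η⟩ = ⟨ζ, K η⟩ for all ζ, η ∈ E), and let 𝒫₁, 𝒫₂ : E → ℝ and u₁, u₂ : E → E satisfy: 𝒫₁, 𝒫₂ are differentiable on E, u₁, u₂ are differentiable at a point x ∈ E, uᵢ(y) = −(1/μ) • K(grad 𝒫ᵢ(y)) for all y ∈ E and i = 1, 2, and div u₁(x) = div u₂(x) = 0. Then the reciprocity identity div(𝒫₁ • u₂)(x) = div(𝒫₂ • u₁)(x) holds, where div v(x) = ∑ᵢ ⟨(fderiv ℝ v x)(eᵢ),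 eᵢ⟩ is the trace of the Fréchet derivative and (eᵢ) the standard orthonormal basis. -/
open scoped RealInnerProductSpace

/-!
The product rule `div (P • u) = P div u + ⟪∇P, u⟫` with `div u₁ = div u₂ = 0` reduces the two
sides to `-(1/μ) ⟪∇P₁, K ∇P₂⟫` and `-(1/μ) ⟪∇P₂, K ∇P₁⟫`, which agree because `K` is symmetric.
-/

noncomputable def divergence {E : Type*} [NormedAddCommGroup E] [InnerProductSpace ℝ E]
    (u : E → E) (x : E) : ℝ :=
  LinearMap.trace ℝ E (fderiv ℝ u x)

section Divergence

variable {E ι : Type*} [NormedAddCommGroup E] [InnerProductSpace ℝ E] [Fintype ι]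

theorem divergence_eq_sum_inner (b : OrthonormalBasis ι ℝ E) (u : E → E) (x : E) :
    divergence u x = ∑ i, ⟪fderiv ℝ u x (b i), b i⟫ := by
  simp_rw [divergence, LinearMap.trace_eq_sum_inner _ b, real_inner_comm]
  rfl

variable [FiniteDimensional ℝ E]

theorem divergence_smul {P : E → ℝ} {u : E → E} {x : E}
    (hP : DifferentiableAt ℝ P x) (hu : DifferentiableAt ℝ u x) :
    divergence (fun y => P y • u y) x = P x * divergence u x + ⟪gradient P x, u x⟫ := by
  rw [divergence, divergence, fderiv_fun_smul hP hu, ContinuousLinearMap.toLinearMap_add,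
    ContinuousLinearMap.toLinearMap_smul, map_add, map_smul, smul_eq_mul, inner_gradient_left]
  congr 1
  exact LinearMap.trace_smulRight _ _

end Divergence

theorem klinkenberg_betti_reciprocity_general {n : ℕ} (μ : ℝ)
    (K : EuclideanSpace ℝ (Fin n) →L[ℝ] EuclideanSpace ℝ (Fin n))
    (hKsymm : ∀ ζ η : EuclideanSpace ℝ (Fin n), ⟪K ζ, η⟫ = ⟪ζ, K η⟫)
    (P₁ P₂ : EuclideanSpace ℝ (Fin n) → ℝ)
    (u₁ u₂ : EuclideanSpace ℝ (Fin n) → EuclideanSpace ℝ (Fin n))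
    (hP₁ : Differentiable ℝ P₁) (hP₂ : Differentiable ℝ P₂)
    (x : EuclideanSpace ℝ (Fin n))
    (hu₁ : DifferentiableAt ℝ u₁ x) (hu₂ : DifferentiableAt ℝ u₂ x)
    (hdarcy₁ : ∀ y, u₁ y = -(1 / μ) • K (gradient P₁ y))
    (hdarcy₂ : ∀ y, u₂ y = -(1 / μ) • K (gradient P₂ y))
    (hdiv₁ : ∑ i : Fin n, ⟪fderiv ℝ u₁ x (EuclideanSpace.single i (1 : ℝ)),
        EuclideanSpace.single i (1 : ℝ)⟫ = 0)
    (hdiv₂ : ∑ i : Fin n, ⟪fderiv ℝ u₂ x (EuclideanSpace.single i (1 : ℝ)),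
        EuclideanSpace.single i (1 : ℝ)⟫ = 0) :
    ∑ i : Fin n, ⟪fderiv ℝ (fun y => P₁ y • u₂ y) x (EuclideanSpace.single i (1 : ℝ)),
        EuclideanSpace.single i (1 : ℝ)⟫ =
      ∑ i : Fin n, ⟪fderiv ℝ (fun y => P₂ y • u₁ y) x (EuclideanSpace.single i (1 : ℝ)),
        EuclideanSpace.single i (1 : ℝ)⟫ := by
  have h_div (u : EuclideanSpace ℝ (Fin n) → EuclideanSpace ℝ (Fin n)) :
      ∑ i : Fin n, ⟪fderiv ℝ u x (EuclideanSpace.single i (1 : ℝ)),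
        EuclideanSpace.single i (1 : ℝ)⟫ = divergence u x := by
    simp [divergence_eq_sum_inner (EuclideanSpace.basisFun (Fin n) ℝ)]
  rw [h_div] at hdiv₁ hdiv₂
  rw [h_div, h_div, divergence_smul (hP₁ x) hu₂, divergence_smul (hP₂ x) hu₁, hdiv₁, hdiv₂,
    hdarcy₁, hdarcy₂, real_inner_smul_right, real_inner_smul_right, ← hKsymm,
    real_inner_comm (gradient P₂ x), mul_zero, mul_zero]

/-- Pointwise Betti-type reciprocity for the Hopf–Cole–transformed Klinkenberg (linear
Darcy) model: for two solution states `(𝒫₁, u₁)`, `(𝒫₂, u₂)` with `uᵢ = −(1/μ) K grad 𝒫ᵢ`,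
symmetric permeability `K`, and `div u₁ x = div u₂ x = 0`, one has
`div (𝒫₁ • u₂) x = div (𝒫₂ • u₁) x`. -/
theorem klinkenberg_betti_reciprocity {n : ℕ} (μ : ℝ) (hμ : 0 < μ)
    (K : EuclideanSpace ℝ (Fin n) →L[ℝ] EuclideanSpace ℝ (Fin n))
    (hKsymm : ∀ ζ η : EuclideanSpace ℝ (Fin n), ⟪K ζ, η⟫ = ⟪ζ, K η⟫)
    (P₁ P₂ : EuclideanSpace ℝ (Fin n) → ℝ)
    (u₁ u₂ : EuclideanSpace ℝ (Fin n) → EuclideanSpace ℝ (Fin n))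
    (hP₁ : Differentiable ℝ P₁) (hP₂ : Differentiable ℝ P₂)
    (x : EuclideanSpace ℝ (Fin n))
    (hu₁ : DifferentiableAt ℝ u₁ x) (hu₂ : DifferentiableAt ℝ u₂ x)
    (hdarcy₁ : ∀ y, u₁ y = -(1 / μ) • K (gradient P₁ y))
    (hdarcy₂ : ∀ y, u₂ y = -(1 / μ) • K (gradient P₂ y))
    (hdiv₁ : ∑ i : Fin n, ⟪fderiv ℝ u₁ x (EuclideanSpace.single i (1 : ℝ)),
        EuclideanSpace.single i (1 : ℝ)⟫ = 0)
    (hdiv₂ : ∑ i : Fin n, ⟪fderiv ℝ u₂ x (EuclideanSpace.single i (1 : ℝ)),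
        EuclideanSpace.single i (1 : ℝ)⟫ = 0) :
    ∑ i : Fin n, ⟪fderiv ℝ (fun y => P₁ y • u₂ y) x (EuclideanSpace.single i (1 : ℝ)),
        EuclideanSpace.single i (1 : ℝ)⟫ =
      ∑ i : Fin n, ⟪fderiv ℝ (fun y => P₂ y • u₁ y) x (EuclideanSpace.single i (1 : ℝ)),
        EuclideanSpace.single i (1 : ℝ)⟫ :=
  klinkenberg_betti_reciprocity_general μ K hKsymm P₁ P₂ u₁ u₂ hP₁ hP₂ x hu₁ hu₂ hdarcy₁ hdarcy₂
    hdiv₁ hdiv₂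
end

section
/- Let E = EuclideanSpace ℝ (Fin 3), let 0 < r_i < r_o, let 𝒫_i, 𝒫_o, k, μ be real numbers with k > 0 and μ > 0, and define on the punctured space E \ {0} the transformed pressure 𝒫(x) = 𝒫_o + (𝒫_i − 𝒫_o) · (r_i r_o/(r_o − r_i)) · (‖x‖⁻¹ − r_o⁻¹) and the velocity u(x) = (k/μ) · (𝒫_i − 𝒫_o) · (r_i r_o/(r_o − r_i)) · (‖x‖⁻³ • x). Then: (i) 𝒫(x) = 𝒫_i whenever ‖x‖ = r_i and 𝒫(x) = 𝒫_o whenever ‖x‖ = r_o; (ii) for every x ≠ 0, 𝒫 is differentiable at x and u(x) = −(k/μ) • grad 𝒫(x); and (iii) for every x ≠ 0, the divergence of u at x vanishes, i.e., ∑ᵢ ⟨(fderiv ℝ u x)(eᵢ), eᵢ⟩ = 0. -/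
open scoped RealInnerProductSpace

/-!
𝒫 is an affine function of the Newtonian potential `‖x‖⁻¹`, whose gradient is `-‖x‖⁻³ • x`,
so Darcy's law holds with `u` a multiple of the Coulomb field `‖x‖⁻³ • x`. The derivative of
`y ↦ ‖y‖ ^ p • y` at `x ≠ 0` is `‖x‖ ^ p • id + p ‖x‖ ^ (p - 2) • ⟪x, ·⟫ x`, of trace
`(n + p) ‖x‖ ^ p` in dimension `n`; for `p = -n = -3` the divergence vanishes.
-/

section NormRpow

variable {E : Type*} [NormedAddCommGroup E] [InnerProductSpace ℝ E] {x : E}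

theorem hasFDerivAt_norm_rpow_of_ne_zero (hx : x ≠ 0) (p : ℝ) :
    HasFDerivAt (fun y : E ↦ ‖y‖ ^ p) ((p * ‖x‖ ^ (p - 2)) • innerSL ℝ x) x := by
  convert! ((hasStrictFDerivAt_norm_sq x).rpow_const (p := p / 2) (by simp [hx])).hasFDerivAt
    using 0
  simp_rw [← Real.rpow_natCast_mul (norm_nonneg _), ← Nat.cast_smul_eq_nsmul ℝ, smul_smul]
  ring_nf

theorem hasGradientAt_norm_rpow_of_ne_zero [CompleteSpace E] (hx : x ≠ 0) (p : ℝ) :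
    HasGradientAt (fun y : E ↦ ‖y‖ ^ p) ((p * ‖x‖ ^ (p - 2)) • x) x := by
  rw [hasGradientAt_iff_hasFDerivAt, map_smul]
  exact hasFDerivAt_norm_rpow_of_ne_zero hx p

theorem HasGradientAt.const_mul_add_const [CompleteSpace E] {f : E → ℝ} {f' : E}
    (hf : HasGradientAt f f' x) (a b : ℝ) :
    HasGradientAt (fun y ↦ a * f y + b) (a • f') x := by
  rw [hasGradientAt_iff_hasFDerivAt] at hf ⊢
  rw [map_smul]
  exact (hf.const_mul a).add_const b

theorem hasFDerivAt_norm_rpow_smul_self (hx : x ≠ 0) (p : ℝ) :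
    HasFDerivAt (fun y : E ↦ ‖y‖ ^ p • y)
      (‖x‖ ^ p • ContinuousLinearMap.id ℝ E
        + ((p * ‖x‖ ^ (p - 2)) • innerSL ℝ x).smulRight x) x :=
  (hasFDerivAt_norm_rpow_of_ne_zero hx p).smul (hasFDerivAt_id x)

theorem trace_fderiv_norm_rpow_smul_self [FiniteDimensional ℝ E] (hx : x ≠ 0) (p : ℝ) :
    LinearMap.trace ℝ E (fderiv ℝ (fun y : E ↦ ‖y‖ ^ p • y) x)
      = (Module.finrank ℝ E + p) * ‖x‖ ^ p := by
  rw [(hasFDerivAt_norm_rpow_smul_self hx p).fderiv]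
  have hx2 : ‖x‖ ^ (p - 2) * ‖x‖ ^ 2 = ‖x‖ ^ p := by
    rw [← Real.rpow_natCast, ← Real.rpow_add (norm_pos_iff.mpr hx)]
    norm_num
  simp only [ContinuousLinearMap.toLinearMap_add, ContinuousLinearMap.toLinearMap_smul,
    ContinuousLinearMap.coe_id, ContinuousLinearMap.coe_smulRight,
    ContinuousLinearMap.toLinearMap_innerSL_apply, map_add, map_smul, LinearMap.trace_id,
    smul_eq_mul, LinearMap.trace_smulRight, LinearMap.smul_apply, innerₛₗ_apply_apply,
    inner_self_eq_norm_sq_to_K, Real.ringHom_apply]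
  rw [mul_assoc, hx2]
  ring

end NormRpow

theorem EuclideanSpace.sum_inner_single_eq_trace {ι : Type*} [Fintype ι] [DecidableEq ι]
    (T : EuclideanSpace ℝ ι →L[ℝ] EuclideanSpace ℝ ι) :
    ∑ i, ⟪T (EuclideanSpace.single i 1), EuclideanSpace.single i 1⟫
      = LinearMap.trace ℝ _ T.toLinearMap := by
  simp [LinearMap.trace_eq_sum_inner T (EuclideanSpace.basisFun ι ℝ), real_inner_comm]

theorem concentric_spheres_analytical_solution_general (ri ro : ℝ) (hri : 0 < ri) (hio : ri < ro)
    (Pin Pout k μ : ℝ)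
    (P : EuclideanSpace ℝ (Fin 3) → ℝ)
    (hPdef : ∀ x, P x = Pout + (Pin - Pout) * (ri * ro / (ro - ri)) * (‖x‖⁻¹ - ro⁻¹))
    (u : EuclideanSpace ℝ (Fin 3) → EuclideanSpace ℝ (Fin 3))
    (hudef : ∀ x, u x = ((k / μ) * (Pin - Pout) * (ri * ro / (ro - ri))) •
      ((‖x‖ ^ 3)⁻¹ • x)) :
    (∀ x : EuclideanSpace ℝ (Fin 3), ‖x‖ = ri → P x = Pin) ∧
    (∀ x : EuclideanSpace ℝ (Fin 3), ‖x‖ = ro → P x = Pout) ∧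
    (∀ x : EuclideanSpace ℝ (Fin 3), x ≠ 0 →
      DifferentiableAt ℝ P x ∧ u x = (-(k / μ)) • gradient P x) ∧
    (∀ x : EuclideanSpace ℝ (Fin 3), x ≠ 0 →
      DifferentiableAt ℝ u x ∧
      ∑ i : Fin 3, ⟪fderiv ℝ u x (EuclideanSpace.single i (1 : ℝ)),
        EuclideanSpace.single i (1 : ℝ)⟫ = 0) := by
  have hro : ro ≠ 0 := (hri.trans hio).ne'
  have hgap : ro - ri ≠ 0 := sub_ne_zero.mpr hio.ne'
  refine ⟨fun x hx ↦ ?_, fun x hx ↦ ?_, ?_⟩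
  · rw [hPdef, hx]; field_simp; ring
  · rw [hPdef, hx]; ring
  set A := (Pin - Pout) * (ri * ro / (ro - ri))
  have hP : P = fun y ↦ A * ‖y‖ ^ (-1 : ℝ) + (Pout - A * ro⁻¹) := by
    funext y; rw [hPdef, Real.rpow_neg_one]; ring
  have hu : u = fun y ↦ (k / μ * A) • (‖y‖ ^ (-3 : ℝ) • y) := by
    funext y; rw [hudef, Real.rpow_neg (norm_nonneg y), mul_assoc]; norm_cast
  refine ⟨fun x hx ↦ ?_, fun x hx ↦ ?_⟩
  · have hgrad : HasGradientAt P (A • ((-1 * ‖x‖ ^ ((-1 : ℝ) - 2)) • x)) x := hP ▸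
      (hasGradientAt_norm_rpow_of_ne_zero hx (-1)).const_mul_add_const A (Pout - A * ro⁻¹)
    refine ⟨hgrad.differentiableAt, ?_⟩
    rw [hgrad.gradient, hu, show (-1 : ℝ) - 2 = -3 by norm_num]
    module
  · have hfield := (hasFDerivAt_norm_rpow_smul_self hx (-3)).differentiableAt
    refine ⟨hu ▸ hfield.const_smul (k / μ * A), ?_⟩
    rw [EuclideanSpace.sum_inner_single_eq_trace, hu, fderiv_fun_const_smul hfield,
      ContinuousLinearMap.toLinearMap_smul, map_smul, trace_fderiv_norm_rpow_smul_self hx,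
      finrank_euclideanSpace_fin]
    norm_num

/-- Analytical solution of the Hopf–Cole–transformed Klinkenberg model for gas flow
between concentric spheres: the transformed pressure
`𝒫 x = 𝒫ₒ + (𝒫ᵢ − 𝒫ₒ)(rᵢ rₒ/(rₒ − rᵢ))(‖x‖⁻¹ − rₒ⁻¹)` and the velocity
`u x = (k/μ)(𝒫ᵢ − 𝒫ₒ)(rᵢ rₒ/(rₒ − rᵢ)) • (‖x‖⁻³ • x)` satisfy (i) the prescribed
boundary values, (ii) the Darcy relation `u = −(k/μ) grad 𝒫` away from the origin, and
(iii) `div u = 0` away from the origin. -/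
theorem concentric_spheres_analytical_solution (ri ro : ℝ) (hri : 0 < ri) (hio : ri < ro)
    (Pin Pout k μ : ℝ) (hk : 0 < k) (hμ : 0 < μ)
    (P : EuclideanSpace ℝ (Fin 3) → ℝ)
    (hPdef : ∀ x, P x = Pout + (Pin - Pout) * (ri * ro / (ro - ri)) * (‖x‖⁻¹ - ro⁻¹))
    (u : EuclideanSpace ℝ (Fin 3) → EuclideanSpace ℝ (Fin 3))
    (hudef : ∀ x, u x = ((k / μ) * (Pin - Pout) * (ri * ro / (ro - ri))) •
      ((‖x‖ ^ 3)⁻¹ • x)) :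
    (∀ x : EuclideanSpace ℝ (Fin 3), ‖x‖ = ri → P x = Pin) ∧
    (∀ x : EuclideanSpace ℝ (Fin 3), ‖x‖ = ro → P x = Pout) ∧
    (∀ x : EuclideanSpace ℝ (Fin 3), x ≠ 0 →
      DifferentiableAt ℝ P x ∧ u x = (-(k / μ)) • gradient P x) ∧
    (∀ x : EuclideanSpace ℝ (Fin 3), x ≠ 0 →
      DifferentiableAt ℝ u x ∧
      ∑ i : Fin 3, ⟪fderiv ℝ u x (EuclideanSpace.single i (1 : ℝ)),
        EuclideanSpace.single i (1 : ℝ)⟫ = 0) :=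
  concentric_spheres_analytical_solution_general ri ro hri hio Pin Pout k μ P hPdef u hudef
end
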